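/- Let X and W be real random variables with E X = E W = 0, E|X|^{2+θ} ≤ M and E|W|^{2+θ} ≤ M for some 0 < θ ≤ 1 and M > 0, and let κ > 0. Then |Cov(t_κ(X), t_κ(W)) − Cov(X, W)| ≤ 2 κ^{−θ} M + κ^{−2(1+θ)} M². -/

import Mathlib

/-!
Since `t_κ x = x` for `|x| ≤ κ`, both errors live on the tails `|x| > κ`, where powers of `|x|`
can be traded for powers of `κ`: `|t_κ x - x| ≤ κ^{-(1+θ)} |x|^{2+θ}` and
`|t_κ x t_κ w - x w| ≤ κ^{-θ} (|x|^{2+θ} + |w|^{2+θ})`. Integrating the second bound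
controls `E[t_κ X t_κ W] - E[X W]`; integrating the first, together with `E X = E W = 0`,
shows `|E t_κ X|, |E t_κ W| ≤ κ^{-(1+θ)} M`, and their product is the remaining term.
-/

open MeasureTheory

/-- The truncation function `t_κ(x) = (x ∧ κ) ∨ (-κ)`. -/
noncomputable def tk (κ x : ℝ) : ℝ := max (min x κ) (-κ)

/-- The covariance `Cov(U, V) = E[UV] - E[U] E[V]` of two real random variables. -/
noncomputable def cov {Ω : Type*} [MeasurableSpace Ω] (P : Measure Ω) (U V : Ω → ℝ) : ℝ :=
  (∫ ω, U ω * V ω ∂P) - (∫ ω, U ω ∂P) * ∫ ω, V ω ∂P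

section Truncation

variable {κ θ : ℝ}

lemma continuous_tk (κ : ℝ) : Continuous (tk κ) :=
  (continuous_id.min continuous_const).max continuous_const

lemma abs_tk_le (hκ : 0 ≤ κ) (x : ℝ) : |tk κ x| ≤ κ :=
  abs_le.2 ⟨le_max_right _ _, max_le (min_le_right _ _) (by linarith)⟩

lemma tk_eq_self {x : ℝ} (hx : |x| ≤ κ) : tk κ x = x := by
  rw [abs_le] at hx
  rw [tk, min_eq_left hx.2, max_eq_left hx.1]

lemma abs_tk_sub_le (hκ : 0 ≤ κ) (x : ℝ) : |tk κ x - x| ≤ |x| := by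
  unfold tk
  rcases le_total x (-κ) with h | h
  · rw [min_eq_left (by linarith), max_eq_right h, abs_of_nonneg (by linarith),
      abs_of_nonpos (by linarith)]
    linarith
  rcases le_total x κ with h' | h'
  · simp [min_eq_left h', max_eq_left h]
  · rw [min_eq_right h', max_eq_left (by linarith), abs_of_nonpos (by linarith),
      abs_of_nonneg (by linarith)]
    linarith

lemma rpow_le_rpow_neg_mul_rpow_add {a q r : ℝ} (hκ : 0 < κ) (hκa : κ ≤ a) (hr : 0 ≤ r) :
    a ^ q ≤ κ ^ (-r) * a ^ (q + r) := by
  have ha : 0 < a := hκ.trans_le hκa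
  calc a ^ q = a ^ (-r) * a ^ (q + r) := by rw [← Real.rpow_add ha]; ring_nf
    _ ≤ κ ^ (-r) * a ^ (q + r) := mul_le_mul_of_nonneg_right
      (Real.rpow_le_rpow_of_nonpos hκ hκa (by linarith)) (by positivity)

lemma mul_self_abs_le_rpow {x : ℝ} (hκ : 0 < κ) (hθ : 0 ≤ θ) (hx : κ ≤ |x|) :
    |x| * |x| ≤ κ ^ (-θ) * |x| ^ (2 + θ) := by
  simpa [← sq, Real.rpow_two] using rpow_le_rpow_neg_mul_rpow_add (q := 2) hκ hx hθ

lemma abs_tk_sub_le_rpow (hκ : 0 < κ) (hθ : 0 ≤ θ) (x : ℝ) :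
    |tk κ x - x| ≤ κ ^ (-(1 + θ)) * |x| ^ (2 + θ) := by
  rcases le_or_gt |x| κ with hx | hx
  · rw [tk_eq_self hx, sub_self, abs_zero]
    positivity
  have htrade := rpow_le_rpow_neg_mul_rpow_add (q := 1) hκ hx.le (by linarith : 0 ≤ 1 + θ)
  rw [Real.rpow_one, show (1 : ℝ) + (1 + θ) = 2 + θ by ring] at htrade
  exact (abs_tk_sub_le hκ.le x).trans htrade

lemma abs_tk_mul_sub_mul_le (hκ : 0 < κ) (hθ : 0 ≤ θ) (x : ℝ) {w : ℝ} (hw : |w| ≤ κ) :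
    |tk κ x * w - x * w| ≤ κ ^ (-θ) * |x| ^ (2 + θ) := by
  rcases le_or_gt |x| κ with hx | hx
  · rw [tk_eq_self hx, sub_self, abs_zero]
    positivity
  calc |tk κ x * w - x * w| = |tk κ x - x| * |w| := by rw [← sub_mul, abs_mul]
    _ ≤ |x| * |x| := mul_le_mul (abs_tk_sub_le hκ.le x) (hw.trans hx.le) (abs_nonneg w)
        (abs_nonneg x)
    _ ≤ κ ^ (-θ) * |x| ^ (2 + θ) := mul_self_abs_le_rpow hκ hθ hx.le

lemma abs_tk_mul_tk_sub_mul_le (hκ : 0 < κ) (hθ : 0 ≤ θ) (x w : ℝ) :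
    |tk κ x * tk κ w - x * w| ≤ κ ^ (-θ) * (|x| ^ (2 + θ) + |w| ^ (2 + θ)) := by
  have hx₀ : 0 ≤ κ ^ (-θ) * |x| ^ (2 + θ) := by positivity
  have hw₀ : 0 ≤ κ ^ (-θ) * |w| ^ (2 + θ) := by positivity
  rw [mul_add]
  rcases le_or_gt |x| κ with hx | hx <;> rcases le_or_gt |w| κ with hw | hw
  · rw [tk_eq_self hx, tk_eq_self hw, sub_self, abs_zero]
    positivity
  · rw [tk_eq_self hx, mul_comm x, mul_comm x]
    linarith [abs_tk_mul_sub_mul_le hκ hθ w hx]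
  · rw [tk_eq_self hw]
    linarith [abs_tk_mul_sub_mul_le hκ hθ x hw]
  · have hmix : |tk κ x * tk κ w - x * w| ≤ κ * κ + |x| * |w| := by
      calc |tk κ x * tk κ w - x * w| ≤ |tk κ x| * |tk κ w| + |x| * |w| := by
            rw [← abs_mul, ← abs_mul]; exact abs_sub _ _
        _ ≤ κ * κ + |x| * |w| := by
            gcongr <;> exact abs_tk_le hκ.le _
    -- `κ² ≤ |x| |w| ≤ (|x|² + |w|²) / 2`
    nlinarith [mul_self_abs_le_rpow hκ hθ hx.le, mul_self_abs_le_rpow hκ hθ hw.le,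
      sq_nonneg (|x| - |w|), mul_le_mul hx.le hw.le hκ.le (abs_nonneg x)]

end Truncation

section Integral

variable {Ω : Type*} [MeasurableSpace Ω] {μ : Measure Ω} {κ θ : ℝ}

lemma abs_integral_sub_le_of_abs_sub_le {f g h : Ω → ℝ} (hf : Integrable f μ)
    (hg : Integrable g μ) (hh : Integrable h μ) (hfgh : ∀ ω, |f ω - g ω| ≤ h ω) :
    |∫ ω, f ω ∂μ - ∫ ω, g ω ∂μ| ≤ ∫ ω, h ω ∂μ := by
  rw [← integral_sub hf hg]
  exact norm_integral_le_of_norm_le hh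
    (ae_of_all _ fun ω => (Real.norm_eq_abs _).trans_le (hfgh ω))

variable [IsFiniteMeasure μ]

lemma integrable_tk_comp {X : Ω → ℝ} (hκ : 0 ≤ κ) (hX : AEStronglyMeasurable X μ) :
    Integrable (fun ω => tk κ (X ω)) μ :=
  .of_bound ((continuous_tk κ).comp_aestronglyMeasurable hX) κ
    (ae_of_all _ fun ω => abs_tk_le hκ (X ω))

lemma abs_integral_tk_le {X : Ω → ℝ} (hκ : 0 < κ) (hθ : 0 ≤ θ)
    (hX : AEStronglyMeasurable X μ)
    (hint : Integrable (fun ω => |X ω| ^ (2 + θ)) μ)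
    (hmean : ∫ ω, X ω ∂μ = 0) :
    |∫ ω, tk κ (X ω) ∂μ| ≤ κ ^ (-(1 + θ)) * ∫ ω, |X ω| ^ (2 + θ) ∂μ := by
  have htk := integrable_tk_comp hκ.le hX
  have hbound : ∀ ω, |tk κ (X ω) - X ω| ≤ κ ^ (-(1 + θ)) * |X ω| ^ (2 + θ) :=
    fun ω => abs_tk_sub_le_rpow hκ hθ (X ω)
  have hXi : Integrable X μ :=
    integrable_of_norm_sub_le hX htk (hint.const_mul _) (ae_of_all _ hbound)
  have hdiff := abs_integral_sub_le_of_abs_sub_le htk hXi (hint.const_mul _) hbound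
  rwa [hmean, sub_zero, integral_const_mul] at hdiff

lemma abs_integral_tk_mul_tk_sub_le {X W : Ω → ℝ} (hκ : 0 < κ) (hθ : 0 ≤ θ)
    (hX : AEStronglyMeasurable X μ) (hW : AEStronglyMeasurable W μ)
    (hintX : Integrable (fun ω => |X ω| ^ (2 + θ)) μ)
    (hintW : Integrable (fun ω => |W ω| ^ (2 + θ)) μ) :
    |∫ ω, tk κ (X ω) * tk κ (W ω) ∂μ - ∫ ω, X ω * W ω ∂μ|
      ≤ κ ^ (-θ) * ((∫ ω, |X ω| ^ (2 + θ) ∂μ) + ∫ ω, |W ω| ^ (2 + θ) ∂μ) := by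
  have htk := (integrable_tk_comp hκ.le hX).mul_bdd (c := κ)
    ((continuous_tk κ).comp_aestronglyMeasurable hW)
    (ae_of_all _ fun ω => abs_tk_le hκ.le (W ω))
  have hdom : Integrable (fun ω => κ ^ (-θ) * (|X ω| ^ (2 + θ) + |W ω| ^ (2 + θ))) μ :=
    (hintX.add hintW).const_mul _
  have hbound : ∀ ω, |tk κ (X ω) * tk κ (W ω) - X ω * W ω|
      ≤ κ ^ (-θ) * (|X ω| ^ (2 + θ) + |W ω| ^ (2 + θ)) :=
    fun ω => abs_tk_mul_tk_sub_mul_le hκ hθ (X ω) (W ω)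
  have hXW : Integrable (fun ω => X ω * W ω) μ :=
    integrable_of_norm_sub_le (hX.mul hW) htk hdom (ae_of_all _ hbound)
  have hdiff := abs_integral_sub_le_of_abs_sub_le htk hXW hdom hbound
  rwa [integral_const_mul, integral_add hintX hintW] at hdiff

end Integral

theorem truncated_covariance_comparison_general {Ω : Type*} [MeasurableSpace Ω]
    (P : Measure Ω) [IsProbabilityMeasure P]
    (X W : Ω → ℝ) (hX : Measurable X) (hW : Measurable W)
    (θ M : ℝ) (hθ0 : 0 < θ)
    (hmeanX : ∫ ω, X ω ∂P = 0) (hmeanW : ∫ ω, W ω ∂P = 0)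
    (hintX : Integrable (fun ω => |X ω| ^ (2 + θ)) P)
    (hintW : Integrable (fun ω => |W ω| ^ (2 + θ)) P)
    (hmomX : ∫ ω, |X ω| ^ (2 + θ) ∂P ≤ M)
    (hmomW : ∫ ω, |W ω| ^ (2 + θ) ∂P ≤ M)
    (κ : ℝ) (hκ : 0 < κ) :
    |cov P (fun ω => tk κ (X ω)) (fun ω => tk κ (W ω)) - cov P X W|
      ≤ 2 * κ ^ (-θ) * M + κ ^ (-(2 * (1 + θ))) * M ^ 2 := by
  have hcov : cov P (fun ω => tk κ (X ω)) (fun ω => tk κ (W ω)) - cov P X W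
      = (∫ ω, tk κ (X ω) * tk κ (W ω) ∂P - ∫ ω, X ω * W ω ∂P)
        - (∫ ω, tk κ (X ω) ∂P) * ∫ ω, tk κ (W ω) ∂P := by
    rw [cov, cov, hmeanX]; ring
  have hmix := (abs_integral_tk_mul_tk_sub_le hκ hθ0.le hX.aestronglyMeasurable
    hW.aestronglyMeasurable hintX hintW).trans (by gcongr : _ ≤ κ ^ (-θ) * (M + M))
  have htkX := (abs_integral_tk_le hκ hθ0.le hX.aestronglyMeasurable hintX hmeanX).trans
    (by gcongr : _ ≤ κ ^ (-(1 + θ)) * M)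
  have htkW := (abs_integral_tk_le hκ hθ0.le hW.aestronglyMeasurable hintW hmeanW).trans
    (by gcongr : _ ≤ κ ^ (-(1 + θ)) * M)
  have hexp : κ ^ (-(2 * (1 + θ))) = κ ^ (-(1 + θ)) * κ ^ (-(1 + θ)) := by
    rw [← Real.rpow_add hκ]; ring_nf
  calc |cov P (fun ω => tk κ (X ω)) (fun ω => tk κ (W ω)) - cov P X W|
      ≤ κ ^ (-θ) * (M + M) + κ ^ (-(1 + θ)) * M * (κ ^ (-(1 + θ)) * M) := by
        rw [hcov]
        refine (abs_sub _ _).trans (add_le_add hmix ?_)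
        rw [abs_mul]
        exact mul_le_mul htkX htkW (abs_nonneg _) ((abs_nonneg _).trans htkX)
    _ = 2 * κ ^ (-θ) * M + κ ^ (-(2 * (1 + θ))) * M ^ 2 := by rw [hexp]; ring

/-- For centered real random variables `X, W` with `E|X|^(2+θ) ≤ M` and
`E|W|^(2+θ) ≤ M` (`0 < θ ≤ 1`, `M > 0`) and any `κ > 0`,
`|Cov(t_κ(X), t_κ(W)) - Cov(X, W)| ≤ 2 κ^(-θ) M + κ^(-2(1+θ)) M²`. -/
theorem truncated_covariance_comparison {Ω : Type*} [MeasurableSpace Ω]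
    (P : Measure Ω) [IsProbabilityMeasure P]
    (X W : Ω → ℝ) (hX : Measurable X) (hW : Measurable W)
    (θ M : ℝ) (hθ0 : 0 < θ) (hθ1 : θ ≤ 1) (hM : 0 < M)
    (hmeanX : ∫ ω, X ω ∂P = 0) (hmeanW : ∫ ω, W ω ∂P = 0)
    (hintX : Integrable (fun ω => |X ω| ^ (2 + θ)) P)
    (hintW : Integrable (fun ω => |W ω| ^ (2 + θ)) P)
    (hintXW : Integrable (fun ω => X ω * W ω) P)
    (hmomX : ∫ ω, |X ω| ^ (2 + θ) ∂P ≤ M)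
    (hmomW : ∫ ω, |W ω| ^ (2 + θ) ∂P ≤ M)
    (κ : ℝ) (hκ : 0 < κ) :
    |cov P (fun ω => tk κ (X ω)) (fun ω => tk κ (W ω)) - cov P X W|
      ≤ 2 * κ ^ (-θ) * M + κ ^ (-(2 * (1 + θ))) * M ^ 2 :=
  truncated_covariance_comparison_general P X W hX hW θ M hθ0 hmeanX hmeanW hintX hintW hmomX hmomW
    κ hκ
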